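/- arXiv:1307.4670 — 4 statements merged into one kernel-verified Lean document; each statement's English description precedes it below -/
import Mathlib

section
/- Let G be a connected finite simple graph on n vertices with Laplacian eigenvalues λ₁ ≥ ⋯ ≥ λₙ = 0. For any vertex subset U with |U| = m, 0 < m < n, we have λ₁ + ⋯ + λₘ ≥ (∑_{u∈U} d_u) + |∂(U, Ū)|/|∂U|, where ∂U is the set of vertices in Ū with at least one neighbor in U, and ∂(U, Ū) is the set of edges between U and Ū. -/
/-!
Ky Fan: if `P` is the orthogonal projection onto an `m`-dimensional subspace and `uⱼ` is an
orthonormal eigenbasis of the Laplacian `L`, then `tr (P L) = ∑ⱼ λⱼ ‖P uⱼ‖²` with weights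
`‖P uⱼ‖² ∈ [0, 1]` of total mass `m`, hence `tr (P L) ≤ λ₁ + ⋯ + λₘ`. Take the subspace
spanned by the `e_u` (`u ∈ U`) and `𝟙_{∂U}`, orthogonal to `𝟙_{U ∪ ∂U}`. Then
`tr (P L) = ∑_{u ∈ U} d_u + |∂(∂U)| / |∂U| - |∂(U ∪ ∂U)| / (m + |∂U|)`, and
`|∂(∂U)| = |∂(U, Ū)| + |∂(U ∪ ∂U)|` since the edges leaving `∂U` either enter `U` or leave
`U ∪ ∂U`.
-/

open Finset

/-- The number of edges of `G` with one endpoint in `U` and the other outside `U`. -/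
def edgeBoundary {n : ℕ} (G : SimpleGraph (Fin n)) [DecidableRel G.Adj]
    (U : Finset (Fin n)) : ℕ :=
  ((Finset.univ : Finset (Fin n × Fin n)).filter
    (fun p => p.1 ∈ U ∧ p.2 ∉ U ∧ G.Adj p.1 p.2)).card

/-- The vertex boundary of `U`: vertices outside `U` with a neighbor in `U`. -/
def vertexBoundary {n : ℕ} (G : SimpleGraph (Fin n)) [DecidableRel G.Adj]
    (U : Finset (Fin n)) : Finset (Fin n) :=
  Finset.univ.filter (fun v => v ∉ U ∧ ∃ u ∈ U, G.Adj u v)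

open Matrix

namespace OrthonormalBasis

variable {ι : Type*} [Fintype ι] (b : OrthonormalBasis ι ℝ (EuclideanSpace ℝ ι))

lemma sum_dotProduct_smul (x : ι → ℝ) : ∑ j, (⇑(b j) ⬝ᵥ x) • ⇑(b j) = x := by
  have h := congrArg WithLp.ofLp (b.sum_repr' (WithLp.toLp 2 x))
  simpa [WithLp.ofLp_sum, EuclideanSpace.inner_eq_star_dotProduct, dotProduct_comm] using h

lemma sum_mul_sq_dotProduct {A : Matrix ι ι ℝ} {μ : ι → ℝ}
    (hb : ∀ j, A *ᵥ ⇑(b j) = μ j • ⇑(b j)) (x : ι → ℝ) :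
    ∑ j, μ j * (⇑(b j) ⬝ᵥ x) ^ 2 = x ⬝ᵥ (A *ᵥ x) := by
  conv_rhs => enter [2]; rw [← b.sum_dotProduct_smul x]
  simp only [mulVec_sum, mulVec_smul, hb, dotProduct_sum, dotProduct_smul, smul_eq_mul]
  exact sum_congr rfl fun j _ => by rw [dotProduct_comm x]; ring

lemma sum_sq_apply (j : ι) : ∑ v, b j v ^ 2 = 1 := by
  rw [← EuclideanSpace.real_norm_sq_eq, b.orthonormal.1 j, one_pow]

end OrthonormalBasis

section BoundaryWeight

variable {ι : Type*} [DecidableEq ι]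

lemma dotProduct_indicator_one [Fintype ι] (x : ι → ℝ) (S : Finset ι) :
    x ⬝ᵥ (S : Set ι).indicator 1 = ∑ v ∈ S, x v := by
  simp [dotProduct, Set.indicator_apply, sum_ite_mem]

lemma indicator_one_dotProduct_self [Fintype ι] (S : Finset ι) :
    (S : Set ι).indicator 1 ⬝ᵥ (S : Set ι).indicator (1 : ι → ℝ) = #S := by
  rw [dotProduct_indicator_one]; simp [Set.indicator_apply]

/-- `boundaryWeight U W x = ‖P x‖²` for the orthogonal projection `P` onto the orthogonal
complement of `𝟙_{U ∪ W}` in the span of the unit vectors `e_u` (`u ∈ U`) and `𝟙_W`; for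
disjoint `U` and nonempty `W` this space has dimension `#U`. -/
noncomputable def boundaryWeight (U W : Finset ι) (x : ι → ℝ) : ℝ :=
  ∑ v ∈ U, x v ^ 2 + (∑ v ∈ W, x v) ^ 2 / #W - (∑ v ∈ U ∪ W, x v) ^ 2 / (#U + #W)

variable {U W : Finset ι}

lemma boundaryWeight_nonneg (hUW : Disjoint U W) (hW : W.Nonempty) (x : ι → ℝ) :
    0 ≤ boundaryWeight U W x := by
  have hw : (0 : ℝ) < #W := by exact_mod_cast hW.card_pos
  obtain ⟨t, hbW⟩ : ∃ t : ℝ, ∑ v ∈ W, x v = #W * t := ⟨_, (mul_div_cancel₀ _ hw.ne').symm⟩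
  have hCS := sq_sum_le_card_mul_sum_sq (s := U) (f := x)
  have hdev : 0 ≤ ∑ v ∈ U, (x v - t) ^ 2 := by positivity
  simp only [sub_sq, sum_add_distrib, sum_sub_distrib, ← sum_mul, ← mul_sum, sum_const,
    nsmul_eq_mul] at hdev
  rw [boundaryWeight, sum_union hUW, hbW, sub_nonneg, div_le_iff₀ (by positivity)]
  field_simp
  nlinarith

lemma boundaryWeight_le_sum_sq [Fintype ι] (hUW : Disjoint U W) (x : ι → ℝ) :
    boundaryWeight U W x ≤ ∑ v, x v ^ 2 := by
  have hW : (∑ v ∈ W, x v) ^ 2 / #W ≤ ∑ v ∈ W, x v ^ 2 :=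
    div_le_of_le_mul₀ (by positivity) (by positivity)
      ((sq_sum_le_card_mul_sum_sq ..).trans_eq (mul_comm ..))
  have hsum : ∑ v ∈ U, x v ^ 2 + ∑ v ∈ W, x v ^ 2 ≤ ∑ v, x v ^ 2 := by
    rw [← sum_union hUW]
    exact sum_le_univ_sum_of_nonneg fun v => sq_nonneg _
  have : 0 ≤ (∑ v ∈ U ∪ W, x v) ^ 2 / (#U + #W) := by positivity
  rw [boundaryWeight]
  linarith

lemma OrthonormalBasis.sum_mul_boundaryWeight [Fintype ι]
    (b : OrthonormalBasis ι ℝ (EuclideanSpace ℝ ι)) {A : Matrix ι ι ℝ} {μ : ι → ℝ}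
    (hb : ∀ j, A *ᵥ ⇑(b j) = μ j • ⇑(b j)) :
    ∑ j, μ j * boundaryWeight U W (b j) =
      ∑ v ∈ U, A v v + (W : Set ι).indicator 1 ⬝ᵥ (A *ᵥ (W : Set ι).indicator 1) / #W -
        (↑(U ∪ W) : Set ι).indicator 1 ⬝ᵥ (A *ᵥ (↑(U ∪ W) : Set ι).indicator 1) / (#U + #W) := by
  have hdiag (v : ι) : ∑ j, μ j * b j v ^ 2 = A v v := by
    simpa [dotProduct_single, single_dotProduct, mulVec_single] using
      b.sum_mul_sq_dotProduct hb (Pi.single v 1)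
  have hind (S : Finset ι) : ∑ j, μ j * (∑ v ∈ S, b j v) ^ 2 =
      (S : Set ι).indicator 1 ⬝ᵥ (A *ᵥ (S : Set ι).indicator 1) := by
    simp only [← dotProduct_indicator_one, b.sum_mul_sq_dotProduct hb]
  simp only [boundaryWeight, mul_add, mul_sub, mul_sum, sum_add_distrib, sum_sub_distrib,
    ← mul_div_assoc, ← sum_div, hind]
  rw [sum_comm]
  simp only [hdiag]

lemma OrthonormalBasis.sum_boundaryWeight [Fintype ι]
    (b : OrthonormalBasis ι ℝ (EuclideanSpace ℝ ι)) (hUW : Disjoint U W) (hW : W.Nonempty) :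
    ∑ j, boundaryWeight U W (b j) = #U := by
  have hw : (#W : ℝ) ≠ 0 := by exact_mod_cast hW.card_pos.ne'
  have hmw : (#U + #W : ℝ) ≠ 0 := by positivity
  have h := b.sum_mul_boundaryWeight (U := U) (W := W) (A := 1) (μ := 1)
    (fun j => by rw [one_mulVec, Pi.one_apply, one_smul])
  simp only [one_mulVec, indicator_one_dotProduct_self, card_union_of_disjoint hUW, Pi.one_apply,
    one_mul, one_apply_eq, sum_const, nsmul_eq_mul, mul_one, Nat.cast_add] at h
  rw [h, div_self hw, div_self hmw, add_sub_cancel_right]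

end BoundaryWeight

lemma sum_mul_le_sum_of_threshold {ι : Type*} [Fintype ι] {f c : ι → ℝ} {F : Finset ι}
    {θ : ℝ} (hF : ∀ i ∈ F, θ ≤ f i) (hFc : ∀ i ∉ F, f i ≤ θ) (hc0 : ∀ i, 0 ≤ c i)
    (hc1 : ∀ i, c i ≤ 1) (hc : ∑ i, c i = #F) :
    ∑ i, f i * c i ≤ ∑ i ∈ F, f i := by
  classical
  have key : ∑ i, (f i - θ) * (c i - if i ∈ F then 1 else 0) ≤ 0 := by
    refine sum_nonpos fun i _ => ?_
    split_ifs with hi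
    · exact mul_nonpos_of_nonneg_of_nonpos (sub_nonneg.2 (hF i hi)) (sub_nonpos.2 (hc1 i))
    · simpa using mul_nonpos_of_nonpos_of_nonneg (sub_nonpos.2 (hFc i hi)) (hc0 i)
  simp only [mul_sub, sub_mul, mul_ite, mul_one, mul_zero, sum_sub_distrib, sum_ite_mem,
    univ_inter, ← mul_sum, hc, sum_const, nsmul_eq_mul] at key
  linarith

section GraphBoundary

variable {n : ℕ} (G : SimpleGraph (Fin n)) [DecidableRel G.Adj]

lemma edgeBoundary_eq_sum (S : Finset (Fin n)) :
    edgeBoundary G S = ∑ i, ∑ j, if i ∈ S ∧ j ∉ S ∧ G.Adj i j then 1 else 0 := by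
  rw [edgeBoundary, card_filter, Fintype.sum_prod_type]

lemma indicator_dotProduct_lapMatrix_mulVec (S : Finset (Fin n)) :
    (S : Set (Fin n)).indicator 1 ⬝ᵥ (G.lapMatrix ℝ *ᵥ (S : Set (Fin n)).indicator 1) =
      edgeBoundary G S := by
  rw [← toLinearMap₂'_apply', SimpleGraph.lapMatrix_toLinearMap₂', edgeBoundary_eq_sum]
  have hsplit (i j : Fin n) :
      (if G.Adj i j then ((S : Set (Fin n)).indicator 1 i - (S : Set (Fin n)).indicator 1 j) ^ 2
        else (0 : ℝ)) =
      (if i ∈ S ∧ j ∉ S ∧ G.Adj i j then 1 else 0) +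
        (if j ∈ S ∧ i ∉ S ∧ G.Adj j i then 1 else 0) := by
    by_cases h : G.Adj i j <;> by_cases hi : i ∈ S <;> by_cases hj : j ∈ S <;>
      simp [h, hi, hj, G.adj_comm j i]
  simp only [hsplit, sum_add_distrib]
  rw [sum_comm (f := fun i j => if j ∈ S ∧ i ∉ S ∧ G.Adj j i then (1 : ℝ) else 0)]
  push_cast
  ring

lemma mem_vertexBoundary {U : Finset (Fin n)} {v : Fin n} :
    v ∈ vertexBoundary G U ↔ v ∉ U ∧ ∃ u ∈ U, G.Adj u v := by
  simp [vertexBoundary]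

lemma disjoint_vertexBoundary (U : Finset (Fin n)) : Disjoint U (vertexBoundary G U) :=
  disjoint_right.2 fun _ hv => ((mem_vertexBoundary G).1 hv).1

lemma vertexBoundary_nonempty {G : SimpleGraph (Fin n)} [DecidableRel G.Adj] (hG : G.Connected)
    {U : Finset (Fin n)} (hU : U.Nonempty) (hU' : Uᶜ.Nonempty) : (vertexBoundary G U).Nonempty := by
  obtain ⟨a, ha⟩ := hU
  obtain ⟨b, hb⟩ := hU'
  obtain ⟨d, -, hd₁, hd₂⟩ :=
    (hG.preconnected a b).some.exists_boundary_dart (U : Set (Fin n)) ha (mem_compl.1 hb)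
  exact ⟨d.snd, (mem_vertexBoundary G).2 ⟨hd₂, d.fst, hd₁, d.adj⟩⟩

lemma edgeBoundary_vertexBoundary (U : Finset (Fin n)) :
    edgeBoundary G (vertexBoundary G U) =
      edgeBoundary G U + edgeBoundary G (U ∪ vertexBoundary G U) := by
  have hsplit (i j : Fin n) :
      (if i ∈ vertexBoundary G U ∧ j ∉ vertexBoundary G U ∧ G.Adj i j then 1 else 0) =
        (if j ∈ U ∧ i ∉ U ∧ G.Adj j i then 1 else 0) +
        (if i ∈ U ∪ vertexBoundary G U ∧ j ∉ U ∪ vertexBoundary G U ∧ G.Adj i j then 1 else 0) := by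
    by_cases h : G.Adj i j
    · have := G.adj_comm i j
      split_ifs <;> simp_all [mem_vertexBoundary] <;> grind
    · simp [h, G.adj_comm j i]
  simp only [edgeBoundary_eq_sum, hsplit, sum_add_distrib]
  rw [sum_comm (f := fun i j => if j ∈ U ∧ i ∉ U ∧ G.Adj j i then 1 else 0)]

end GraphBoundary

lemma SimpleGraph.sum_degree_add_edgeBoundary_div_le {n : ℕ} {G : SimpleGraph (Fin n)}
    [DecidableRel G.Adj] (hL : (G.lapMatrix ℝ).IsHermitian) {U : Finset (Fin n)}
    (hW : (vertexBoundary G U).Nonempty) :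
    ∑ u ∈ U, (G.degree u : ℝ) + edgeBoundary G U / #(vertexBoundary G U) ≤
      ∑ j, hL.eigenvalues j * boundaryWeight U (vertexBoundary G U) (hL.eigenvectorBasis j) := by
  have hw : (0 : ℝ) < #(vertexBoundary G U) := by exact_mod_cast hW.card_pos
  have hY : (edgeBoundary G (U ∪ vertexBoundary G U) : ℝ) / (#U + #(vertexBoundary G U)) ≤
      edgeBoundary G (U ∪ vertexBoundary G U) / #(vertexBoundary G U) :=
    div_le_div_of_nonneg_left (by positivity) hw (by simp)
  rw [hL.eigenvectorBasis.sum_mul_boundaryWeight hL.mulVec_eigenvectorBasis,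
    indicator_dotProduct_lapMatrix_mulVec, indicator_dotProduct_lapMatrix_mulVec,
    edgeBoundary_vertexBoundary]
  have hdeg (v : Fin n) : G.lapMatrix ℝ v v = G.degree v := by
    simp [SimpleGraph.lapMatrix, SimpleGraph.degMatrix]
  simp only [hdeg, Nat.cast_add, add_div]
  linarith

/-- `∑_{i≤m} λᵢ ≥ ∑_{u∈U} d_u + |∂(U,Ū)|/|∂U|`. -/
theorem stmt7 (n : ℕ) (G : SimpleGraph (Fin n)) [DecidableRel G.Adj]
    (hconn : G.Connected)
    (hL : (G.lapMatrix ℝ).IsHermitian)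
    (lam : Fin n → ℝ) (σ : Equiv.Perm (Fin n))
    (hlam : lam = hL.eigenvalues ∘ σ)
    (hlamAnti : ∀ i j : Fin n, i ≤ j → lam j ≤ lam i)
    (U : Finset (Fin n)) (m : ℕ) (hU : U.card = m) (hm0 : 0 < m) (hmn : m < n) :
    (∑ u ∈ U, (G.degree u : ℝ)) +
      (edgeBoundary G U : ℝ) / ((vertexBoundary G U).card : ℝ) ≤
      ∑ i ∈ Finset.filter (fun i : Fin n => (i : ℕ) < m) Finset.univ, lam i := by
  set W := vertexBoundary G U
  have hUne : U.Nonempty := card_pos.1 (hU ▸ hm0)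
  have hUc : Uᶜ.Nonempty := card_pos.1 (by rw [card_compl, Fintype.card_fin]; omega)
  have hW : W.Nonempty := vertexBoundary_nonempty hconn hUne hUc
  have hUW : Disjoint U W := disjoint_vertexBoundary G U
  set b := hL.eigenvectorBasis
  set c : Fin n → ℝ := fun i => boundaryWeight U W (b (σ i))
  have hc : ∑ i, c i = #{i : Fin n | (i : ℕ) < m} := by
    rw [Fin.card_filter_val_lt, min_eq_right hmn.le, ← hU,
      Equiv.sum_comp σ (fun j => boundaryWeight U W (b j)), b.sum_boundaryWeight hUW hW]
  calc _ ≤ ∑ j, hL.eigenvalues j * boundaryWeight U W (b j) :=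
        G.sum_degree_add_edgeBoundary_div_le hL hW
    _ = ∑ i, lam i * c i := by
        rw [hlam, ← Equiv.sum_comp σ]; rfl
    _ ≤ _ := by
        refine sum_mul_le_sum_of_threshold (θ := lam ⟨m, hmn⟩) (fun i hi => ?_) (fun i hi => ?_)
          (fun i => boundaryWeight_nonneg hUW hW _) (fun i => ?_) hc
        · exact hlamAnti _ _ (Fin.le_def.2 (mem_filter.1 hi).2.le)
        · exact hlamAnti _ _ (Fin.le_def.2 (not_lt.1 (by simpa using hi)))
        · exact (boundaryWeight_le_sum_sq hUW _).trans_eq (b.sum_sq_apply _)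
end

section
/- Let G be a finite simple graph with Laplacian eigenvalues λ₁ ≥ ⋯ ≥ λₙ, and let U ⊆ V with |U| = m. Let h be the number of connected components of the induced subgraph G[U] that are not connected components of G. Then λ₁ + ⋯ + λₘ ≥ (∑_{u∈U} d_u) + h. -/
/-!
By Ky Fan's principle, `λ₁ + ⋯ + λₘ ≥ tr (P L)` for every orthogonal projection `P` of rank `m`,
so it suffices to construct such a `P` with `tr (P L) ≥ ∑_{u ∈ U} d_u + h`.

Call a component of `G[U]` exposed if it has a neighbour outside `U`; let `S ⊆ U` be the union of
the `h` exposed components and `T = V \ U`. Every vertex of `S` is joined by a path to `T`, so the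
block `A = L[S,S]` is positive definite and each `w ∈ T` has an `L`-harmonic extension
`y_w = e_w - A⁻¹ L[S,w]`, supported on `S ∪ {w}`. Let `P` project onto the orthogonal complement
of the `y_w`; it has rank `n - |T| = m`. The Gram matrix of the `y_w` dominates the identity, so
`tr (P L) ≥ tr L - tr (Yᵀ L Y)`, and `Yᵀ L Y` is the Schur complement `L[T,T] - L[T,S] A⁻¹ L[S,T]`;
hence `tr (P L) ≥ ∑_{u ∈ U} d_u + tr (L[T,S] A⁻¹ L[S,T])`. Finally, the indicators of the exposed
components are `A`-orthogonal and the `A`-form of each counts the edges it sends out of `U`, so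
Bessel's inequality for them bounds the last trace from below by `h`.
-/

open Finset Matrix

lemma Finset.sum_mul_le_sum_of_threshold {ι : Type*} [Fintype ι] (s : Finset ι)
    {lam p : ι → ℝ} (τ : ℝ) (hs : ∀ j ∈ s, τ ≤ lam j) (hsc : ∀ j ∉ s, lam j ≤ τ)
    (hp0 : ∀ j, 0 ≤ p j) (hp1 : ∀ j, p j ≤ 1) (hp : ∑ j, p j = #s) :
    ∑ j, lam j * p j ≤ ∑ j ∈ s, lam j := by
  classical
  -- `∑ lam p - ∑_s lam = ∑ (lam - τ) (p - 1_s)`, and every summand is `≤ 0`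
  have key : ∑ j, lam j * p j - ∑ j ∈ s, lam j
      = ∑ j, (lam j - τ) * (p j - if j ∈ s then 1 else 0) := by
    simp only [mul_sub, sum_sub_distrib, ← mul_sum, sub_mul, mul_ite, mul_one, mul_zero,
      sum_ite_mem, univ_inter, sum_const, nsmul_eq_mul, hp]
    ring
  have hterm : ∀ j, (lam j - τ) * (p j - if j ∈ s then 1 else 0) ≤ 0 := fun j => by
    by_cases hj : j ∈ s
    · simpa [hj] using
        mul_nonpos_of_nonneg_of_nonpos (sub_nonneg.2 (hs j hj)) (sub_nonpos.2 (hp1 j))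
    · simpa [hj] using mul_nonpos_of_nonpos_of_nonneg (sub_nonpos.2 (hsc j hj)) (hp0 j)
  linarith [sum_nonpos fun j (_ : j ∈ univ) => hterm j]

lemma Fin.sum_mul_le_sum_lt_of_antitone {n m : ℕ} {lam p : Fin n → ℝ} (hlam : Antitone lam)
    (hp0 : ∀ j, 0 ≤ p j) (hp1 : ∀ j, p j ≤ 1) (hp : ∑ j, p j = m) :
    ∑ j, lam j * p j ≤ ∑ j ∈ univ.filter (fun j : Fin n => (j : ℕ) < m), lam j := by
  have hmn : m ≤ n := by
    exact_mod_cast (show (m : ℝ) ≤ n by simpa [hp] using sum_le_sum fun j (_ : j ∈ univ) => hp1 j)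
  obtain _ | n := n
  · simp
  have hcard : #{j : Fin (n + 1) | (j : ℕ) < m} = m := by
    rw [Fin.card_filter_val_lt]; omega
  -- the value at index `m - 1` separates the `m` largest values from the rest
  refine sum_mul_le_sum_of_threshold _ (lam ⟨m - 1, by omega⟩) (fun j hj => hlam ?_)
    (fun j hj => hlam ?_) hp0 hp1 (by rw [hp, hcard])
  · simp only [mem_filter, mem_univ, true_and] at hj
    exact Fin.le_def.2 (show (j : ℕ) ≤ m - 1 by omega)
  · simp only [mem_filter, mem_univ, true_and, not_lt] at hj
    exact Fin.le_def.2 (show m - 1 ≤ (j : ℕ) by omega)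

namespace Matrix

lemma transpose_toBlock_of_isSymm {β : Type*} {L : Matrix β β ℝ} (hL : L.IsSymm) (p q : β → Prop) :
    (L.toBlock p q)ᵀ = L.toBlock q p := by
  ext u v
  exact hL.apply u v

variable {ι : Type*} [Fintype ι]

lemma dotProduct_mulVec_comm_of_isSymm {M : Matrix ι ι ℝ} (hM : M.IsSymm) (x y : ι → ℝ) :
    x ⬝ᵥ M *ᵥ y = y ⬝ᵥ M *ᵥ x := by
  rw [dotProduct_mulVec x, ← vecMul_transpose, hM.eq, dotProduct_comm]

lemma dotProduct_transpose_mul_self_mulVec_nonneg {κ : Type*} [Fintype κ] (W : Matrix κ ι ℝ)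
    (x : ι → ℝ) : 0 ≤ x ⬝ᵥ (Wᵀ * W) *ᵥ x := by
  rw [← mulVec_mulVec, dotProduct_mulVec, vecMul_transpose]
  exact sum_nonneg fun i _ => mul_self_nonneg _

lemma posSemidef_of_isSymm_of_isIdempotentElem {P : Matrix ι ι ℝ} (hP : P.IsSymm)
    (hP2 : IsIdempotentElem P) : P.PosSemidef := by
  have := posSemidef_conjTranspose_mul_self P
  rwa [conjTranspose_eq_transpose_of_trivial, hP.eq, hP2.eq] at this

section

variable [DecidableEq ι]

open scoped MatrixOrder in
lemma PosSemidef.trace_mul_nonneg {M S : Matrix ι ι ℝ} (hM : M.PosSemidef) (hS : S.PosSemidef) :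
    0 ≤ (M * S).trace := by
  obtain ⟨C, rfl⟩ := CStarAlgebra.nonneg_iff_eq_star_mul_self.mp hS.nonneg
  rw [star_eq_conjTranspose, ← Matrix.mul_assoc, trace_mul_cycle]
  exact (hM.mul_mul_conjTranspose_same C).trace_nonneg

lemma isUnit_of_posSemidef_sub_one {N : Matrix ι ι ℝ} (hN : (N - 1).PosSemidef) : IsUnit N := by
  have := PosDef.one.add_posSemidef hN
  rw [add_sub_cancel] at this
  exact this.isUnit

lemma posSemidef_one_sub_inv {N : Matrix ι ι ℝ} (hN : (N - 1).PosSemidef) :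
    (1 - N⁻¹).PosSemidef := by
  set W := N - 1
  have hNW : N = 1 + W := by simp [W]
  have hWs : W.IsSymm := by
    have := hN.isHermitian
    rwa [IsHermitian, conjTranspose_eq_transpose_of_trivial] at this
  have hNs : N.IsSymm := by
    rw [hNW]; exact isSymm_one.add hWs
  have hNinv : N * N⁻¹ = 1 :=
    mul_nonsing_inv _ ((isUnit_iff_isUnit_det _).mp (isUnit_of_posSemidef_sub_one hN))
  refine posSemidef_iff_dotProduct_mulVec.mpr ⟨?_, fun x => ?_⟩
  · rw [IsHermitian, conjTranspose_eq_transpose_of_trivial, transpose_sub, transpose_one,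
      transpose_nonsing_inv, hNs.eq]
  set y := N⁻¹ *ᵥ x
  have hx : x = N *ᵥ y := by simp [y, mulVec_mulVec, hNinv]
  -- `x ⬝ x - x ⬝ N⁻¹ x = y ⬝ (N² - N) y = y ⬝ (W + WᵀW) y`
  have key : x ⬝ᵥ (1 - N⁻¹) *ᵥ x = y ⬝ᵥ W *ᵥ y + y ⬝ᵥ (Wᵀ * W) *ᵥ y := by
    have hNN : N * N - N = W + Wᵀ * W := by rw [hWs.eq, hNW]; noncomm_ring
    have hxx : x ⬝ᵥ x = y ⬝ᵥ (N * N) *ᵥ y := by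
      rw [hx, dotProduct_mulVec_comm_of_isSymm hNs, mulVec_mulVec]
    have hxy : x ⬝ᵥ N⁻¹ *ᵥ x = y ⬝ᵥ N *ᵥ y := by
      rw [← hx, dotProduct_comm]
    rw [sub_mulVec, one_mulVec, dotProduct_sub, hxx, hxy, ← dotProduct_sub, ← sub_mulVec, hNN,
      add_mulVec, dotProduct_add]
  rw [star_trivial, key]
  exact add_nonneg (by simpa using hN.dotProduct_mulVec_nonneg y)
    (dotProduct_transpose_mul_self_mulVec_nonneg W y)

/-- Bessel's inequality for a family of `A`-orthogonal vectors, with `b ⬝ A⁻¹ b` playing the role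
of the squared norm of the functional `b`. -/
lemma PosDef.sum_sq_div_le_dotProduct_inv_mulVec {A : Matrix ι ι ℝ} (hA : A.PosDef)
    {κ : Type*} (s : Finset κ) (z : κ → ι → ℝ)
    (horth : ∀ c ∈ s, ∀ c' ∈ s, c ≠ c' → z c ⬝ᵥ A *ᵥ z c' = 0) (b : ι → ℝ) :
    ∑ c ∈ s, (b ⬝ᵥ z c) ^ 2 / (z c ⬝ᵥ A *ᵥ z c) ≤ b ⬝ᵥ A⁻¹ *ᵥ b := by
  have hAs : A.IsSymm := by
    have := hA.isHermitian
    rwa [IsHermitian, conjTranspose_eq_transpose_of_trivial] at this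
  have hAinv : A * A⁻¹ = 1 := mul_nonsing_inv _ ((isUnit_iff_isUnit_det _).mp hA.isUnit)
  set q : κ → ℝ := fun c => z c ⬝ᵥ A *ᵥ z c
  set x := A⁻¹ *ᵥ b
  -- `x - p` is `A`-orthogonal to every `z c`, where `p` is the `A`-projection of `x` on them
  set p : ι → ℝ := ∑ c ∈ s, ((b ⬝ᵥ z c) / q c) • z c
  have hAx : A *ᵥ x = b := by simp [x, mulVec_mulVec, hAinv]
  have hterm : ∀ c, (b ⬝ᵥ z c) / q c * (b ⬝ᵥ z c) = (b ⬝ᵥ z c) ^ 2 / q c := fun c => by ring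
  have hpx : p ⬝ᵥ A *ᵥ x = ∑ c ∈ s, (b ⬝ᵥ z c) ^ 2 / q c := by
    rw [hAx]
    simp only [p, sum_dotProduct, smul_dotProduct, smul_eq_mul, dotProduct_comm (z _) b, hterm]
  have hpp : p ⬝ᵥ A *ᵥ p = ∑ c ∈ s, (b ⬝ᵥ z c) ^ 2 / q c := by
    simp only [p, sum_dotProduct, smul_dotProduct, smul_eq_mul]
    refine Finset.sum_congr rfl fun c hc => ?_
    rw [dotProduct_mulVec_comm_of_isSymm hAs, sum_dotProduct, Finset.sum_eq_single c]
    · rw [smul_dotProduct, smul_eq_mul, dotProduct_mulVec_comm_of_isSymm hAs]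
      by_cases hq : q c = 0
      · simp [q, hq]
      · field_simp
        rfl
    · intro c' hc' hne
      rw [smul_dotProduct, dotProduct_mulVec_comm_of_isSymm hAs, horth c hc c' hc' hne.symm,
        smul_zero]
    · exact fun hcs => absurd hc hcs
  have hxx : x ⬝ᵥ A *ᵥ x = b ⬝ᵥ A⁻¹ *ᵥ b := by rw [hAx, dotProduct_comm]
  have hnonneg : 0 ≤ (x - p) ⬝ᵥ A *ᵥ (x - p) := by
    simpa using hA.posSemidef.dotProduct_mulVec_nonneg (x - p)
  rw [mulVec_sub, dotProduct_sub, sub_dotProduct, sub_dotProduct,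
    dotProduct_mulVec_comm_of_isSymm hAs x p, hxx, hpx, hpp] at hnonneg
  linarith

end

lemma IsHermitian.trace_mul_le_sum_eigenvalues {n m : ℕ} {M P : Matrix (Fin n) (Fin n) ℝ}
    (hM : M.IsHermitian) (hPs : P.IsSymm) (hPi : IsIdempotentElem P) (hPt : P.trace = m)
    {lam : Fin n → ℝ} {σ : Equiv.Perm (Fin n)} (hlam : lam = hM.eigenvalues ∘ σ)
    (hanti : Antitone lam) :
    (P * M).trace ≤ ∑ i ∈ univ.filter (fun i : Fin n => (i : ℕ) < m), lam i := by
  set V : Matrix (Fin n) (Fin n) ℝ := (hM.eigenvectorUnitary : Matrix (Fin n) (Fin n) ℝ)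
  have hstar : star V = Vᵀ := by
    rw [star_eq_conjTranspose, conjTranspose_eq_transpose_of_trivial]
  have hVVt : V * Vᵀ = 1 := hstar ▸ mem_unitaryGroup_iff.mp hM.eigenvectorUnitary.2
  have hVtV : Vᵀ * V = 1 := hstar ▸ mem_unitaryGroup_iff'.mp hM.eigenvectorUnitary.2
  have hspec : M = V * diagonal hM.eigenvalues * Vᵀ := by
    have := hM.spectral_theorem
    rwa [Unitary.conjStarAlgAut_apply, hstar, show (RCLike.ofReal ∘ hM.eigenvalues : Fin n → ℝ)
      = hM.eigenvalues from rfl] at this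
  -- the weights `q j = vⱼᵀ P vⱼ` of the eigenvectors `vⱼ` lie in `[0, 1]` and sum to `tr P`
  set q : Fin n → ℝ := fun j => (Vᵀ * P * V) j j
  have hPpsd := posSemidef_of_isSymm_of_isIdempotentElem hPs hPi
  have hIPpsd := posSemidef_of_isSymm_of_isIdempotentElem (isSymm_one.sub hPs) hPi.one_sub
  have hq0 : ∀ j, 0 ≤ q j := fun j => by
    simpa [q, conjTranspose_eq_transpose_of_trivial] using
      (hPpsd.conjTranspose_mul_mul_same V).diag_nonneg (i := j)
  have hq1 : ∀ j, q j ≤ 1 := fun j => by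
    have := (hIPpsd.conjTranspose_mul_mul_same V).diag_nonneg (i := j)
    rw [conjTranspose_eq_transpose_of_trivial, Matrix.mul_sub, Matrix.sub_mul, Matrix.mul_one,
      hVtV] at this
    simpa [q] using this
  have hqsum : ∑ j, q j = m := by
    change (Vᵀ * P * V).trace = m
    rw [← hPt, trace_mul_cycle, hVVt, Matrix.one_mul]
  have htr : (P * M).trace = ∑ j, hM.eigenvalues j * q j := by
    conv_lhs => rw [hspec]
    rw [← Matrix.mul_assoc, ← Matrix.mul_assoc, trace_mul_comm, ← Matrix.mul_assoc,
      ← Matrix.mul_assoc, trace]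
    refine sum_congr rfl fun j _ => ?_
    simp [q, mul_diagonal, mul_comm]
  rw [htr, ← Equiv.sum_comp σ]
  rw [← Equiv.sum_comp σ q] at hqsum
  subst hlam
  exact Fin.sum_mul_le_sum_lt_of_antitone hanti (fun j => hq0 _) (fun j => hq1 _) hqsum

section

variable {κ : Type*} [Fintype κ] [DecidableEq κ]

/-- The orthogonal projection onto the column space of `Y` (when `Yᵀ * Y` is invertible). -/
noncomputable def colProj (Y : Matrix ι κ ℝ) : Matrix ι ι ℝ := Y * (Yᵀ * Y)⁻¹ * Yᵀ

lemma isSymm_colProj (Y : Matrix ι κ ℝ) : (colProj Y).IsSymm := by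
  rw [IsSymm, colProj, transpose_mul, transpose_mul, transpose_transpose, transpose_nonsing_inv,
    transpose_mul, transpose_transpose, Matrix.mul_assoc]

lemma isIdempotentElem_colProj {Y : Matrix ι κ ℝ} (hY : IsUnit (Yᵀ * Y)) :
    IsIdempotentElem (colProj Y) := by
  have hinv : Yᵀ * Y * (Yᵀ * Y)⁻¹ = 1 := mul_nonsing_inv _ ((isUnit_iff_isUnit_det _).mp hY)
  simp only [IsIdempotentElem, colProj, Matrix.mul_assoc]
  rw [← Matrix.mul_assoc Yᵀ Y, ← Matrix.mul_assoc (Yᵀ * Y), hinv, Matrix.one_mul]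

lemma trace_colProj {Y : Matrix ι κ ℝ} (hY : IsUnit (Yᵀ * Y)) :
    (colProj Y).trace = Fintype.card κ := by
  rw [colProj, Matrix.mul_assoc, trace_mul_comm, Matrix.mul_assoc,
    nonsing_inv_mul _ ((isUnit_iff_isUnit_det _).mp hY), trace_one]

lemma trace_colProj_mul_le {Y : Matrix ι κ ℝ} {L : Matrix ι ι ℝ}
    (hY : (Yᵀ * Y - 1).PosSemidef) (hL : L.PosSemidef) :
    (colProj Y * L).trace ≤ (Yᵀ * L * Y).trace := by
  have h := (posSemidef_one_sub_inv hY).trace_mul_nonneg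
    (by simpa [conjTranspose_eq_transpose_of_trivial] using hL.conjTranspose_mul_mul_same Y)
  rw [Matrix.sub_mul, Matrix.one_mul, trace_sub, sub_nonneg] at h
  rwa [colProj, Matrix.mul_assoc, trace_mul_comm, ← Matrix.mul_assoc, trace_mul_comm]

end

end Matrix

namespace Finset

variable {β : Type*} [DecidableEq β]

def inclMatrix (S : Finset β) : Matrix β S ℝ := Matrix.of fun i u => if i = u then 1 else 0

variable (S T : Finset β)

lemma inclMatrix_mulVec_apply (x : S → ℝ) (i : β) :
    (S.inclMatrix *ᵥ x) i = if h : i ∈ S then x ⟨i, h⟩ else 0 := by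
  split_ifs with h
  · rw [Matrix.mulVec, dotProduct, sum_eq_single ⟨i, h⟩] <;> simp +contextual [inclMatrix,
      Subtype.ext_iff, eq_comm]
  · exact sum_eq_zero fun u _ => by simp [inclMatrix, show i ≠ u from fun he => h (he ▸ u.2)]

variable [Fintype β]

lemma boole_dotProduct (C : Finset β) (x : β → ℝ) :
    (fun i => if i ∈ C then (1 : ℝ) else 0) ⬝ᵥ x = ∑ i ∈ C, x i := by
  simp [dotProduct, ite_mul, sum_ite_mem]

lemma mul_inclMatrix_apply {γ : Type*} (M : Matrix γ β ℝ) (a : γ) (u : S) :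
    (M * S.inclMatrix) a u = M a u := by
  simp [Matrix.mul_apply, inclMatrix, mul_ite]

lemma transpose_inclMatrix_mul_apply {γ : Type*} (M : Matrix β γ ℝ) (u : S) (a : γ) :
    (S.inclMatrixᵀ * M) u a = M u a := by
  simp [Matrix.mul_apply, inclMatrix, ite_mul]

lemma transpose_inclMatrix_mul_mul_inclMatrix (M : Matrix β β ℝ) :
    S.inclMatrixᵀ * M * T.inclMatrix = M.toBlock (· ∈ S) (· ∈ T) := by
  ext u v
  rw [mul_inclMatrix_apply, transpose_inclMatrix_mul_apply, Matrix.toBlock_apply]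

lemma transpose_inclMatrix_mul_inclMatrix_self : S.inclMatrixᵀ * S.inclMatrix = 1 := by
  ext u v
  rw [transpose_inclMatrix_mul_apply]
  simp only [inclMatrix, Matrix.of_apply, Matrix.one_apply, Subtype.coe_inj]

lemma transpose_inclMatrix_mul_inclMatrix_of_disjoint (h : Disjoint S T) :
    S.inclMatrixᵀ * T.inclMatrix = 0 := by
  ext u v
  rw [transpose_inclMatrix_mul_apply]
  simp only [inclMatrix, Matrix.of_apply, Matrix.zero_apply, ite_eq_right_iff]
  intro huv
  exact absurd (huv ▸ v.2) (disjoint_left.mp h u.2)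

lemma transpose_inclMatrix_mulVec_apply (x : β → ℝ) (u : S) : (S.inclMatrixᵀ *ᵥ x) u = x u := by
  rw [Matrix.mulVec, dotProduct, sum_eq_single (u : β)] <;> simp +contextual [inclMatrix]

lemma dotProduct_toBlock_mulVec (M : Matrix β β ℝ) (x : S → ℝ) (y : T → ℝ) :
    x ⬝ᵥ M.toBlock (· ∈ S) (· ∈ T) *ᵥ y = (S.inclMatrix *ᵥ x) ⬝ᵥ M *ᵥ (T.inclMatrix *ᵥ y) := by
  rw [← transpose_inclMatrix_mul_mul_inclMatrix, ← Matrix.mulVec_mulVec, ← Matrix.mulVec_mulVec,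
    Matrix.dotProduct_mulVec x, Matrix.vecMul_transpose]

end Finset

namespace Matrix

variable {β : Type*} [Fintype β] [DecidableEq β] (L : Matrix β β ℝ) (S T : Finset β)

/-- The column indexed by `w ∈ T` equals the indicator of `w` on `T`, vanishes off `S ∪ T`,
and is `L`-harmonic on `S`. -/
noncomputable def harmonicExtension : Matrix β T ℝ :=
  T.inclMatrix - S.inclMatrix * ((L.toBlock (· ∈ S) (· ∈ S))⁻¹ * L.toBlock (· ∈ S) (· ∈ T))

variable {S T}

lemma transpose_inclMatrix_sub_mul_self (h : Disjoint S T) (Z : Matrix S T ℝ) :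
    (T.inclMatrix - S.inclMatrix * Z)ᵀ * (T.inclMatrix - S.inclMatrix * Z) = 1 + Zᵀ * Z := by
  rw [transpose_sub, transpose_mul, Matrix.sub_mul, Matrix.mul_sub, Matrix.mul_sub,
    T.transpose_inclMatrix_mul_inclMatrix_self, ← Matrix.mul_assoc T.inclMatrixᵀ,
    T.transpose_inclMatrix_mul_inclMatrix_of_disjoint S h.symm, Matrix.zero_mul,
    Matrix.mul_assoc Zᵀ, S.transpose_inclMatrix_mul_inclMatrix_of_disjoint T h, Matrix.mul_zero,
    Matrix.mul_assoc Zᵀ, ← Matrix.mul_assoc S.inclMatrixᵀ,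
    S.transpose_inclMatrix_mul_inclMatrix_self, Matrix.one_mul]
  abel

lemma posSemidef_transpose_harmonicExtension_mul_self_sub_one (h : Disjoint S T) :
    ((harmonicExtension L S T)ᵀ * harmonicExtension L S T - 1).PosSemidef := by
  rw [harmonicExtension, transpose_inclMatrix_sub_mul_self h, add_sub_cancel_left]
  have := posSemidef_conjTranspose_mul_self
    ((L.toBlock (· ∈ S) (· ∈ S))⁻¹ * L.toBlock (· ∈ S) (· ∈ T))
  rwa [conjTranspose_eq_transpose_of_trivial] at this

lemma transpose_harmonicExtension_mul {γ : Type*} (M : Matrix β γ ℝ) :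
    (harmonicExtension L S T)ᵀ * M = T.inclMatrixᵀ * M
      - ((L.toBlock (· ∈ S) (· ∈ S))⁻¹ * L.toBlock (· ∈ S) (· ∈ T))ᵀ * (S.inclMatrixᵀ * M) := by
  rw [harmonicExtension, transpose_sub, transpose_mul, Matrix.sub_mul, Matrix.mul_assoc]

lemma transpose_inclMatrix_mul_mul_harmonicExtension
    (hA : IsUnit (L.toBlock (· ∈ S) (· ∈ S))) :
    S.inclMatrixᵀ * L * harmonicExtension L S T = 0 := by
  rw [harmonicExtension, Matrix.mul_sub, ← Matrix.mul_assoc,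
    Finset.transpose_inclMatrix_mul_mul_inclMatrix, Finset.transpose_inclMatrix_mul_mul_inclMatrix,
    ← Matrix.mul_assoc, mul_nonsing_inv _ ((isUnit_iff_isUnit_det _).mp hA), Matrix.one_mul,
    sub_self]

/-- The Gram matrix of the harmonic extension in the form `L` is a Schur complement. -/
lemma transpose_harmonicExtension_mul_mul (hL : L.IsSymm)
    (hA : IsUnit (L.toBlock (· ∈ S) (· ∈ S))) :
    (harmonicExtension L S T)ᵀ * L * harmonicExtension L S T
      = L.toBlock (· ∈ T) (· ∈ T) - (L.toBlock (· ∈ S) (· ∈ T))ᵀ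
          * ((L.toBlock (· ∈ S) (· ∈ S))⁻¹ * L.toBlock (· ∈ S) (· ∈ T)) := by
  have hBt : T.inclMatrixᵀ * L * S.inclMatrix = (L.toBlock (· ∈ S) (· ∈ T))ᵀ := by
    rw [Finset.transpose_inclMatrix_mul_mul_inclMatrix, transpose_toBlock_of_isSymm hL]
  rw [Matrix.mul_assoc, transpose_harmonicExtension_mul, ← Matrix.mul_assoc S.inclMatrixᵀ,
    transpose_inclMatrix_mul_mul_harmonicExtension L hA, Matrix.mul_zero, sub_zero,
    harmonicExtension, Matrix.mul_sub, Matrix.mul_sub, ← Matrix.mul_assoc,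
    Finset.transpose_inclMatrix_mul_mul_inclMatrix, ← Matrix.mul_assoc, ← Matrix.mul_assoc, hBt]

end Matrix

namespace SimpleGraph

variable {V : Type*} [Fintype V]

section

variable (G : SimpleGraph V) (U : Finset V)

/-- The components of `G[U]` that are not components of `G`. -/
def exposedComponents : Set (G.induce (U : Set V)).ConnectedComponent :=
  {c | ∃ u : (U : Set V), (G.induce (U : Set V)).connectedComponentMk u = c ∧
    ∃ w : V, w ∉ U ∧ G.Adj ↑u w}

open Classical in
noncomputable def componentFinset (c : (G.induce (U : Set V)).ConnectedComponent) : Finset V :=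
  {x | ∃ hx : x ∈ U, (G.induce (U : Set V)).connectedComponentMk ⟨x, hx⟩ = c}

open Classical in
noncomputable def exposedPart : Finset V :=
  {x | ∃ c ∈ G.exposedComponents U, x ∈ G.componentFinset U c}

variable {G U}

lemma mem_componentFinset {c : (G.induce (U : Set V)).ConnectedComponent} {x : V} :
    x ∈ G.componentFinset U c ↔
      ∃ hx : x ∈ U, (G.induce (U : Set V)).connectedComponentMk ⟨x, hx⟩ = c := by
  simp [componentFinset]

lemma componentFinset_subset (c : (G.induce (U : Set V)).ConnectedComponent) :
    G.componentFinset U c ⊆ U :=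
  fun _ hx => (mem_componentFinset.mp hx).1

lemma mem_componentFinset_of_adj {c : (G.induce (U : Set V)).ConnectedComponent} {x y : V}
    (hx : x ∈ G.componentFinset U c) (hy : y ∈ U) (hxy : G.Adj x y) :
    y ∈ G.componentFinset U c := by
  obtain ⟨hxU, rfl⟩ := mem_componentFinset.mp hx
  exact mem_componentFinset.mpr ⟨hy, (ConnectedComponent.connectedComponentMk_eq_of_adj
    (by simpa [comap_adj] using hxy)).symm⟩

lemma disjoint_componentFinset {c c' : (G.induce (U : Set V)).ConnectedComponent} (h : c ≠ c') :
    Disjoint (G.componentFinset U c) (G.componentFinset U c') := by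
  refine Finset.disjoint_left.mpr fun x hx hx' => h ?_
  obtain ⟨_, rfl⟩ := mem_componentFinset.mp hx
  obtain ⟨_, rfl⟩ := mem_componentFinset.mp hx'
  rfl

lemma componentFinset_subset_exposedPart {c : (G.induce (U : Set V)).ConnectedComponent}
    (hc : c ∈ G.exposedComponents U) : G.componentFinset U c ⊆ G.exposedPart U := by
  intro x hx
  simpa [exposedPart] using ⟨c, hc, hx⟩

lemma exposedPart_subset : G.exposedPart U ⊆ U := by
  intro x hx
  obtain ⟨c, -, hx⟩ := by simpa [exposedPart] using hx
  exact componentFinset_subset c hx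

lemma exists_reachable_not_mem_of_mem_exposedPart {x : V} (hx : x ∈ G.exposedPart U) :
    ∃ w ∉ U, G.Reachable x w := by
  obtain ⟨c, ⟨u, rfl, w, hw, huw⟩, hx⟩ := by simpa [exposedPart] using hx
  obtain ⟨hxU, hxu⟩ := mem_componentFinset.mp hx
  refine ⟨w, hw, ?_⟩
  have := (ConnectedComponent.exact hxu).map (Embedding.induce (U : Set V)).toHom
  exact this.trans huw.reachable

end

variable [DecidableEq V]

lemma inclMatrix_exposedPart_mulVec_componentIndicator {G : SimpleGraph V} {U : Finset V}
    {c : (G.induce (U : Set V)).ConnectedComponent} (hc : c ∈ G.exposedComponents U) :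
    (G.exposedPart U).inclMatrix *ᵥ (fun u => if (u : V) ∈ G.componentFinset U c then 1 else 0)
      = fun i => if i ∈ G.componentFinset U c then 1 else 0 := by
  ext i
  rw [Finset.inclMatrix_mulVec_apply]
  by_cases hiS : i ∈ G.exposedPart U
  · simp [hiS]
  · have hiC : i ∉ G.componentFinset U c :=
      fun h => hiS (componentFinset_subset_exposedPart hc h)
    simp [hiS, hiC]

section

variable {G : SimpleGraph V} [DecidableRel G.Adj]

lemma sum_lapMatrix_mulVec (x : V → ℝ) : ∑ i, (G.lapMatrix ℝ *ᵥ x) i = 0 := by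
  calc ∑ i, (G.lapMatrix ℝ *ᵥ x) i = 1 ⬝ᵥ G.lapMatrix ℝ *ᵥ x := (one_dotProduct _).symm
    _ = x ⬝ᵥ G.lapMatrix ℝ *ᵥ 1 :=
      dotProduct_mulVec_comm_of_isSymm (G.isSymm_lapMatrix (R := ℝ)) _ _
    _ = 0 := by rw [Pi.one_def, lapMatrix_mulVec_const_eq_zero, dotProduct_zero]

lemma lapMatrix_mulVec_indicator_apply_of_not_mem {C : Finset V} {i : V} (hi : i ∉ C) :
    (G.lapMatrix ℝ *ᵥ fun j => if j ∈ C then 1 else 0) i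
      = -#{j ∈ G.neighborFinset i | j ∈ C} := by
  rw [lapMatrix_mulVec_apply, if_neg hi, sum_boole]
  simp

variable {U : Finset V} {c c' : (G.induce (U : Set V)).ConnectedComponent}

lemma filter_neighborFinset_mem_componentFinset_eq_empty {i : V} (hi : i ∈ U)
    (hic : i ∉ G.componentFinset U c) : {j ∈ G.neighborFinset i | j ∈ G.componentFinset U c} = ∅ :=
  filter_eq_empty_iff.mpr fun j hj hjc =>
    hic (mem_componentFinset_of_adj hjc hi ((mem_neighborFinset G i j).mp hj).symm)

lemma dotProduct_lapMatrix_mulVec_componentIndicator_of_ne (h : c ≠ c') :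
    (fun i => if i ∈ G.componentFinset U c then (1 : ℝ) else 0)
      ⬝ᵥ G.lapMatrix ℝ *ᵥ (fun i => if i ∈ G.componentFinset U c' then 1 else 0) = 0 := by
  rw [Finset.boole_dotProduct]
  refine sum_eq_zero fun i hi => ?_
  have hic' : i ∉ G.componentFinset U c' := Finset.disjoint_left.mp (disjoint_componentFinset h) hi
  rw [lapMatrix_mulVec_indicator_apply_of_not_mem hic',
    filter_neighborFinset_mem_componentFinset_eq_empty (componentFinset_subset c hi) hic']
  simp

lemma dotProduct_lapMatrix_mulVec_componentIndicator_self :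
    (fun i => if i ∈ G.componentFinset U c then (1 : ℝ) else 0)
      ⬝ᵥ G.lapMatrix ℝ *ᵥ (fun i => if i ∈ G.componentFinset U c then 1 else 0)
      = ∑ w ∈ Uᶜ, (#{j ∈ G.neighborFinset w | j ∈ G.componentFinset U c} : ℝ) := by
  set C := G.componentFinset U c
  set x : V → ℝ := G.lapMatrix ℝ *ᵥ fun i => if i ∈ C then 1 else 0
  -- the entries of `L x` sum to zero, and outside `C` they are minus the edge counts
  have hsplit := sum_add_sum_compl C x
  rw [sum_lapMatrix_mulVec] at hsplit
  have hcompl : ∑ i ∈ Cᶜ, x i = -∑ w ∈ Cᶜ, (#{j ∈ G.neighborFinset w | j ∈ C} : ℝ) := by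
    rw [← sum_neg_distrib]
    exact sum_congr rfl fun i hi => lapMatrix_mulVec_indicator_apply_of_not_mem (mem_compl.mp hi)
  rw [Finset.boole_dotProduct, eq_neg_of_add_eq_zero_left hsplit, hcompl, neg_neg]
  refine (sum_subset (compl_subset_compl.mpr (componentFinset_subset c)) fun i hi hiU => ?_).symm
  rw [filter_neighborFinset_mem_componentFinset_eq_empty (by simpa using hiU)
    (mem_compl.mp hi), card_empty, Nat.cast_zero]

lemma toBlock_lapMatrix_col_dotProduct_componentIndicator (hc : c ∈ G.exposedComponents U)
    (w : (Uᶜ : Finset V)) :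
    (fun u => (G.lapMatrix ℝ).toBlock (· ∈ G.exposedPart U) (· ∈ Uᶜ) u w)
      ⬝ᵥ (fun u => if (u : V) ∈ G.componentFinset U c then 1 else 0)
      = -#{j ∈ G.neighborFinset w | j ∈ G.componentFinset U c} := by
  change (((G.lapMatrix ℝ).toBlock (· ∈ G.exposedPart U) (· ∈ Uᶜ))ᵀ *ᵥ _) w = _
  rw [transpose_toBlock_of_isSymm (G.isSymm_lapMatrix (R := ℝ)),
    ← Finset.transpose_inclMatrix_mul_mul_inclMatrix, ← mulVec_mulVec, ← mulVec_mulVec,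
    inclMatrix_exposedPart_mulVec_componentIndicator hc, Finset.transpose_inclMatrix_mulVec_apply,
    lapMatrix_mulVec_indicator_apply_of_not_mem
      (fun h => (mem_compl.mp w.2) (componentFinset_subset c h))]

lemma sum_card_filter_neighborFinset_mem_componentFinset_pos (hc : c ∈ G.exposedComponents U) :
    0 < ∑ w ∈ Uᶜ, (#{j ∈ G.neighborFinset w | j ∈ G.componentFinset U c} : ℝ) := by
  obtain ⟨u, hu, w, hw, huw⟩ := hc
  refine lt_of_lt_of_le ?_ (single_le_sum (fun w' _ => by positivity) (mem_compl.mpr hw))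
  rw [Nat.cast_pos, card_pos]
  exact ⟨u, mem_filter.mpr ⟨(mem_neighborFinset G w u).mpr huw.symm,
    mem_componentFinset.mpr ⟨u.2, hu⟩⟩⟩

end

variable (G : SimpleGraph V) [DecidableRel G.Adj] (U : Finset V)

lemma lapMatrix_apply_self (i : V) : G.lapMatrix ℝ i i = G.degree i := by
  simp [lapMatrix, degMatrix]

/-- Every exposed vertex is joined by a path to a vertex outside `U`, where a vector supported on
the exposed part vanishes; so such a vector with zero Laplacian form is zero. -/
lemma posDef_toBlock_lapMatrix_exposedPart :
    ((G.lapMatrix ℝ).toBlock (· ∈ G.exposedPart U) (· ∈ G.exposedPart U)).PosDef := by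
  refine posDef_iff_dotProduct_mulVec.mpr
    ⟨(G.isHermitian_lapMatrix (R := ℝ)).submatrix _, fun x hx => ?_⟩
  rw [star_trivial, Finset.dotProduct_toBlock_mulVec]
  set y := (G.exposedPart U).inclMatrix *ᵥ x
  refine lt_of_le_of_ne (by simpa using (posSemidef_lapMatrix ℝ G).dotProduct_mulVec_nonneg y)
    fun h0 => hx ?_
  have hreach := (lapMatrix_toLinearMap₂'_apply'_eq_zero_iff_forall_reachable G y).mp
    (by rw [toLinearMap₂'_apply']; exact h0.symm)
  ext u
  obtain ⟨w, hw, hr⟩ := exists_reachable_not_mem_of_mem_exposedPart u.2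
  have hwS : w ∉ G.exposedPart U := fun h => hw (exposedPart_subset h)
  have hyu : y u = x u := by simp [y, Finset.inclMatrix_mulVec_apply]
  have hyw : y w = 0 := by simp [y, Finset.inclMatrix_mulVec_apply, hwS]
  rw [Pi.zero_apply, ← hyu, hreach _ _ hr, hyw]

/-- Bessel's inequality for the indicators of the exposed components, which are orthogonal for
the Laplacian form. -/
lemma ncard_exposedComponents_le_trace :
    ((G.exposedComponents U).ncard : ℝ) ≤
      (((G.lapMatrix ℝ).toBlock (· ∈ G.exposedPart U) (· ∈ Uᶜ))ᵀ *
        (((G.lapMatrix ℝ).toBlock (· ∈ G.exposedPart U) (· ∈ G.exposedPart U))⁻¹ *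
          (G.lapMatrix ℝ).toBlock (· ∈ G.exposedPart U) (· ∈ Uᶜ))).trace := by
  set S := G.exposedPart U
  set A := (G.lapMatrix ℝ).toBlock (· ∈ S) (· ∈ S)
  set B := (G.lapMatrix ℝ).toBlock (· ∈ S) (· ∈ Uᶜ)
  set 𝒞 := (G.exposedComponents U).toFinite.toFinset
  have h𝒞 : ∀ c ∈ 𝒞, c ∈ G.exposedComponents U := fun c hc => by simpa [𝒞] using hc
  set z : (G.induce (U : Set V)).ConnectedComponent → S → ℝ :=
    fun c u => if (u : V) ∈ G.componentFinset U c then 1 else 0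
  set e : (G.induce (U : Set V)).ConnectedComponent → V → ℝ :=
    fun c w => #{j ∈ G.neighborFinset w | j ∈ G.componentFinset U c}
  have horth : ∀ c ∈ 𝒞, ∀ c' ∈ 𝒞, c ≠ c' → z c ⬝ᵥ A *ᵥ z c' = 0 := fun c hc c' hc' hne => by
    rw [Finset.dotProduct_toBlock_mulVec,
      inclMatrix_exposedPart_mulVec_componentIndicator (h𝒞 c hc),
      inclMatrix_exposedPart_mulVec_componentIndicator (h𝒞 c' hc'),
      dotProduct_lapMatrix_mulVec_componentIndicator_of_ne hne]
  have hq : ∀ c ∈ 𝒞, z c ⬝ᵥ A *ᵥ z c = ∑ w ∈ Uᶜ, e c w := fun c hc => by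
    rw [Finset.dotProduct_toBlock_mulVec,
      inclMatrix_exposedPart_mulVec_componentIndicator (h𝒞 c hc),
      dotProduct_lapMatrix_mulVec_componentIndicator_self]
  have hBessel : ∀ w : (Uᶜ : Finset V),
      ∑ c ∈ 𝒞, e c w ^ 2 / ∑ w' ∈ Uᶜ, e c w' ≤ (Bᵀ * (A⁻¹ * B)) w w := fun w => by
    have hA : A.PosDef := posDef_toBlock_lapMatrix_exposedPart G U
    have := hA.sum_sq_div_le_dotProduct_inv_mulVec 𝒞 z horth (fun u => B u w)
    rw [sum_congr rfl fun c hc => by rw [toBlock_lapMatrix_col_dotProduct_componentIndicator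
      (h𝒞 c hc), hq c hc, neg_sq]] at this
    convert this using 1
    simp [mul_apply, mulVec, dotProduct, mul_sum]
  -- `e ≤ e²` for the integer edge counts `e`
  have hone : ∀ c ∈ 𝒞, 1 ≤ ∑ w : (Uᶜ : Finset V), e c w ^ 2 / ∑ w' ∈ Uᶜ, e c w' := by
    intro c hc
    have hpos := sum_card_filter_neighborFinset_mem_componentFinset_pos (h𝒞 c hc)
    rw [sum_coe_sort Uᶜ (fun w => e c w ^ 2 / ∑ w' ∈ Uᶜ, e c w'), ← sum_div, le_div_iff₀ hpos,
      one_mul]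
    exact sum_le_sum fun w _ => by
      simp only [e]
      exact_mod_cast Nat.le_self_pow two_ne_zero _
  rw [Set.ncard_eq_toFinset_card _ (G.exposedComponents U).toFinite]
  calc (𝒞.card : ℝ) = ∑ _c ∈ 𝒞, (1 : ℝ) := by simp
    _ ≤ ∑ c ∈ 𝒞, ∑ w : (Uᶜ : Finset V), e c w ^ 2 / ∑ w' ∈ Uᶜ, e c w' := sum_le_sum hone
    _ = ∑ w : (Uᶜ : Finset V), ∑ c ∈ 𝒞, e c w ^ 2 / ∑ w' ∈ Uᶜ, e c w' := sum_comm
    _ ≤ (Bᵀ * (A⁻¹ * B)).trace := sum_le_sum fun w _ => hBessel w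

noncomputable def brouwerHaemersProjection : Matrix V V ℝ :=
  1 - colProj (harmonicExtension (G.lapMatrix ℝ) (G.exposedPart U) Uᶜ)

lemma posSemidef_transpose_harmonicExtension_exposedPart_mul_self_sub_one :
    ((harmonicExtension (G.lapMatrix ℝ) (G.exposedPart U) Uᶜ)ᵀ
      * harmonicExtension (G.lapMatrix ℝ) (G.exposedPart U) Uᶜ - 1).PosSemidef :=
  posSemidef_transpose_harmonicExtension_mul_self_sub_one _
    (disjoint_compl_right_iff.mpr exposedPart_subset)

lemma isSymm_brouwerHaemersProjection : (G.brouwerHaemersProjection U).IsSymm :=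
  isSymm_one.sub (isSymm_colProj _)

lemma isIdempotentElem_brouwerHaemersProjection :
    IsIdempotentElem (G.brouwerHaemersProjection U) :=
  (isIdempotentElem_colProj (isUnit_of_posSemidef_sub_one
    (posSemidef_transpose_harmonicExtension_exposedPart_mul_self_sub_one G U))).one_sub

lemma trace_brouwerHaemersProjection : (G.brouwerHaemersProjection U).trace = #U := by
  rw [brouwerHaemersProjection, trace_sub, trace_one, trace_colProj (isUnit_of_posSemidef_sub_one
    (posSemidef_transpose_harmonicExtension_exposedPart_mul_self_sub_one G U)),
    Fintype.card_coe, ← card_add_card_compl U]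
  push_cast
  ring

lemma trace_toBlock_lapMatrix (T : Finset V) :
    ((G.lapMatrix ℝ).toBlock (· ∈ T) (· ∈ T)).trace = ∑ i ∈ T, (G.degree i : ℝ) := by
  rw [trace, ← sum_coe_sort T]
  exact sum_congr rfl fun i _ => lapMatrix_apply_self G i

lemma sum_degree_add_ncard_exposedComponents_le_trace_mul_lapMatrix :
    ∑ u ∈ U, (G.degree u : ℝ) + (G.exposedComponents U).ncard
      ≤ (G.brouwerHaemersProjection U * G.lapMatrix ℝ).trace := by
  set Y := harmonicExtension (G.lapMatrix ℝ) (G.exposedPart U) Uᶜ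
  have hproj : (colProj Y * G.lapMatrix ℝ).trace ≤ (Yᵀ * G.lapMatrix ℝ * Y).trace :=
    trace_colProj_mul_le (posSemidef_transpose_harmonicExtension_exposedPart_mul_self_sub_one G U)
      (posSemidef_lapMatrix ℝ G)
  have hschur := congrArg trace (transpose_harmonicExtension_mul_mul (G.lapMatrix ℝ)
    (G.isSymm_lapMatrix (R := ℝ)) (posDef_toBlock_lapMatrix_exposedPart G U).isUnit (T := Uᶜ))
  have hdeg : (G.lapMatrix ℝ).trace = ∑ u ∈ U, (G.degree u : ℝ) + ∑ w ∈ Uᶜ, (G.degree w : ℝ) := by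
    rw [sum_add_sum_compl, trace]
    exact sum_congr rfl fun i _ => lapMatrix_apply_self G i
  rw [trace_sub, trace_toBlock_lapMatrix] at hschur
  rw [brouwerHaemersProjection, Matrix.sub_mul, Matrix.one_mul, trace_sub]
  linarith [ncard_exposedComponents_le_trace G U]

end SimpleGraph

/-- Brouwer–Haemers: `∑_{i≤m} λᵢ ≥ ∑_{u∈U} d_u + h`, where `h` is the number of
connected components of `G[U]` that are not connected components of `G`
(i.e. components containing a vertex with a neighbor outside `U`). -/
theorem stmt9 (n : ℕ) (G : SimpleGraph (Fin n)) [DecidableRel G.Adj]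
    (hL : (G.lapMatrix ℝ).IsHermitian)
    (lam : Fin n → ℝ) (σ : Equiv.Perm (Fin n))
    (hlam : lam = hL.eigenvalues ∘ σ)
    (hlamAnti : ∀ i j : Fin n, i ≤ j → lam j ≤ lam i)
    (U : Finset (Fin n)) (m : ℕ) (hU : U.card = m)
    (h : ℕ)
    (hh : h = Set.ncard {c : (SimpleGraph.induce (↑U : Set (Fin n)) G).ConnectedComponent |
      ∃ u : (↑U : Set (Fin n)),
        (SimpleGraph.induce (↑U : Set (Fin n)) G).connectedComponentMk u = c ∧
        ∃ w : Fin n, w ∉ U ∧ G.Adj ↑u w}) :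
    (∑ u ∈ U, (G.degree u : ℝ)) + (h : ℝ) ≤
      ∑ i ∈ Finset.filter (fun i : Fin n => (i : ℕ) < m) Finset.univ, lam i := by
  subst hh hU
  calc _ ≤ (G.brouwerHaemersProjection U * G.lapMatrix ℝ).trace :=
        G.sum_degree_add_ncard_exposedComponents_le_trace_mul_lapMatrix U
    _ ≤ _ := hL.trace_mul_le_sum_eigenvalues (G.isSymm_brouwerHaemersProjection U)
        (G.isIdempotentElem_brouwerHaemersProjection U) (G.trace_brouwerHaemersProjection U)
        hlam hlamAnti
end

section
/- Let G be a connected finite simple graph on n vertices with e edges and Laplacian eigenvalues λ₁ ≥ ⋯ ≥ λₙ. For each 0 < m < n there exists a vertex set U of size m such that λ₁ + ⋯ + λₘ ≥ (∑_{u∈U} d_u) + 2em/(n(n−1)). -/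
/-!
Take `U` to be `m` vertices of smallest degree: their average degree is at most the overall
average `2e/n`. The Laplacian has trace `2e` and a zero eigenvalue, so `λ₁ + ⋯ + λ_{n-1} ≥ 2e`,
and the `m` largest eigenvalues have average at least that of the `n - 1` largest, whence
`λ₁ + ⋯ + λₘ ≥ 2em/(n-1) = 2em/n + 2em/(n(n-1))`.
-/

open Finset

namespace Finset

variable {ι α : Type*} [AddCommMonoid α] [PartialOrder α] [IsOrderedAddMonoid α]
  {f : ι → α} {s t : Finset ι}

theorem card_nsmul_sum_le_card_nsmul_sum_of_forall_le (h : ∀ i ∈ s, ∀ j ∈ t, f i ≤ f j) :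
    #t • ∑ i ∈ s, f i ≤ #s • ∑ j ∈ t, f j :=
  calc #t • ∑ i ∈ s, f i = ∑ i ∈ s, ∑ _j ∈ t, f i := by simp only [smul_sum, sum_const]
    _ ≤ ∑ _i ∈ s, ∑ j ∈ t, f j := sum_le_sum fun i hi ↦ sum_le_sum fun j hj ↦ h i hi j hj
    _ = #s • ∑ j ∈ t, f j := sum_const _

theorem card_nsmul_sum_le_card_nsmul_sum_of_subset [DecidableEq ι] (hts : t ⊆ s)
    (h : ∀ i ∈ t, ∀ j ∈ s \ t, f i ≤ f j) :
    #s • ∑ i ∈ t, f i ≤ #t • ∑ i ∈ s, f i := by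
  rw [← card_sdiff_add_card_eq_card hts, ← sum_sdiff hts, add_nsmul, nsmul_add]
  exact add_le_add_left (card_nsmul_sum_le_card_nsmul_sum_of_forall_le h) _

theorem _root_.Antitone.card_nsmul_sum_Iio_le [LinearOrder ι] [LocallyFiniteOrderBot ι]
    (hf : Antitone f) {a b : ι} (hab : a ≤ b) :
    #(Iio a) • ∑ i ∈ Iio b, f i ≤ #(Iio b) • ∑ i ∈ Iio a, f i :=
  card_nsmul_sum_le_card_nsmul_sum_of_subset (α := αᵒᵈ) (Iio_subset_Iio hab) fun _ hi _ hj ↦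
    hf <| (mem_Iio.1 hi).le.trans <| by simpa using (mem_sdiff.1 hj).2

variable [Fintype ι] [DecidableEq ι]

theorem exists_card_eq_forall_le {β : Type*} [LinearOrder β] (g : ι → β) {m : ℕ}
    (hm : m ≤ Fintype.card ι) : ∃ U : Finset ι, #U = m ∧ ∀ i ∈ U, ∀ j ∉ U, g i ≤ g j := by
  induction m with
  | zero => exact ⟨∅, card_empty, by simp⟩
  | succ m ih =>
    obtain ⟨U, hU, hUle⟩ := ih (by omega)
    have hne : Uᶜ.Nonempty := by
      rw [← card_pos, card_compl]
      omega
    obtain ⟨v, hv, hvmin⟩ := exists_min_image Uᶜ g hne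
    have hvU : v ∉ U := mem_compl.1 hv
    refine ⟨insert v U, by rw [card_insert_of_notMem hvU, hU], fun i hi j hj ↦ ?_⟩
    rw [mem_insert, not_or] at hj
    rcases mem_insert.1 hi with rfl | hi
    · exact hvmin j (mem_compl.2 hj.2)
    · exact hUle i hi j hj.2

theorem exists_card_eq_card_nsmul_sum_le {α : Type*} [AddCommMonoid α] [LinearOrder α]
    [IsOrderedAddMonoid α] (f : ι → α) {m : ℕ} (hm : m ≤ Fintype.card ι) :
    ∃ U : Finset ι, #U = m ∧ Fintype.card ι • ∑ i ∈ U, f i ≤ m • ∑ i, f i := by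
  obtain ⟨U, hU, hUle⟩ := exists_card_eq_forall_le f hm
  refine ⟨U, hU, ?_⟩
  simpa [hU] using card_nsmul_sum_le_card_nsmul_sum_of_subset (subset_univ U)
    fun i hi j hj ↦ hUle i hi j (mem_sdiff.1 hj).2

end Finset

-- The left-hand side is at most `c / n + c / (n (n - 1)) = c / (n - 1)`.
theorem add_div_mul_sub_one_le {x y c n : ℝ} (hn : 1 < n) (hx : n * x ≤ c)
    (hy : c ≤ (n - 1) * y) : x + c / (n * (n - 1)) ≤ y := by
  have hn1 : 0 < n - 1 := by linarith
  have hn0 : 0 < n := by linarith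
  calc x + c / (n * (n - 1)) ≤ c / n + c / (n * (n - 1)) := by
        gcongr
        rw [le_div_iff₀ hn0, mul_comm]
        exact hx
    _ = c / (n - 1) := by
        field_simp
        ring
    _ ≤ y := by
        rw [div_le_iff₀ hn1, mul_comm]
        exact hy

namespace SimpleGraph

section

variable {V : Type*} [Fintype V] [DecidableEq V] (G : SimpleGraph V) [DecidableRel G.Adj]

theorem sum_eigenvalues_lapMatrix (hL : (G.lapMatrix ℝ).IsHermitian) :
    ∑ i, hL.eigenvalues i = 2 * #G.edgeFinset := by
  have htrace : (G.lapMatrix ℝ).trace = ∑ v, (G.degree v : ℝ) := by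
    simp [Matrix.trace, lapMatrix, degMatrix]
  rw [hL.trace_eq_sum_eigenvalues] at htrace
  simpa [← Nat.cast_sum, sum_degrees_eq_twice_card_edges] using htrace

theorem exists_eigenvalues_lapMatrix_eq_zero [Nonempty V] (hL : (G.lapMatrix ℝ).IsHermitian) :
    ∃ i, hL.eigenvalues i = 0 := by
  have hdet := hL.det_eq_prod_eigenvalues
  rw [det_lapMatrix_eq_zero, eq_comm, prod_eq_zero_iff] at hdet
  obtain ⟨i, -, hi⟩ := hdet
  exact ⟨i, by exact_mod_cast hi⟩

theorem exists_card_eq_card_mul_sum_degree_le {m : ℕ} (hm : m ≤ Fintype.card V) :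
    ∃ U : Finset V, #U = m ∧ Fintype.card V * ∑ u ∈ U, G.degree u ≤ 2 * #G.edgeFinset * m := by
  simpa [sum_degrees_eq_twice_card_edges, mul_comm] using
    exists_card_eq_card_nsmul_sum_le (fun v ↦ G.degree v) hm

end

theorem two_mul_card_edgeFinset_mul_le_sum_Iio_eigenvalues_lapMatrix {n : ℕ}
    (G : SimpleGraph (Fin n)) [DecidableRel G.Adj] (hL : (G.lapMatrix ℝ).IsHermitian)
    (σ : Equiv.Perm (Fin n)) (hanti : Antitone (hL.eigenvalues ∘ σ)) (a : Fin n) :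
    2 * #G.edgeFinset * a ≤ (n - 1 : ℝ) * ∑ i ∈ Iio a, hL.eigenvalues (σ i) := by
  have hn : 0 < n := a.pos
  have : Nonempty (Fin n) := ⟨a⟩
  set ℓ : Fin n := ⟨n - 1, by omega⟩
  have hlast : hL.eigenvalues (σ ℓ) ≤ 0 := by
    obtain ⟨j, hj⟩ := exists_eigenvalues_lapMatrix_eq_zero G hL
    simpa [hj] using hanti (show σ.symm j ≤ ℓ from Fin.le_def.2 (by simp [ℓ]; omega))
  have hsum : 2 * #G.edgeFinset ≤ ∑ i ∈ Iio ℓ, hL.eigenvalues (σ i) := by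
    have : Iio ℓ = univ.erase ℓ := by ext i; simp [Fin.lt_def, Fin.ext_iff, ℓ]; omega
    rw [← sum_eigenvalues_lapMatrix G hL, ← Equiv.sum_comp σ, this,
      ← sum_erase_add _ _ (mem_univ ℓ)]
    linarith
  have hcast : ((ℓ : ℕ) : ℝ) = n - 1 := by simp [ℓ, Nat.cast_pred hn]
  have h := hanti.card_nsmul_sum_Iio_le (show a ≤ ℓ from Fin.le_def.2 (by simp [ℓ]; omega))
  simp only [Fin.card_Iio, nsmul_eq_mul, hcast, Function.comp_apply] at h
  calc 2 * #G.edgeFinset * (a : ℝ) ≤ a * ∑ i ∈ Iio ℓ, hL.eigenvalues (σ i) := by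
        rw [mul_comm]
        gcongr
    _ ≤ _ := h

end SimpleGraph

theorem stmt14_general (n : ℕ) (G : SimpleGraph (Fin n)) [DecidableRel G.Adj]
    (hL : (G.lapMatrix ℝ).IsHermitian)
    (lam : Fin n → ℝ) (σ : Equiv.Perm (Fin n))
    (hlam : lam = hL.eigenvalues ∘ σ)
    (hlamAnti : ∀ i j : Fin n, i ≤ j → lam j ≤ lam i)
    (e : ℕ) (he : e = G.edgeFinset.card)
    (m : ℕ) (hm0 : 0 < m) (hmn : m < n) :
    ∃ U : Finset (Fin n), U.card = m ∧
      (∑ u ∈ U, (G.degree u : ℝ)) + 2 * (e : ℝ) * m / ((n : ℝ) * ((n : ℝ) - 1)) ≤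
        ∑ i ∈ Finset.filter (fun i : Fin n => (i : ℕ) < m) Finset.univ, lam i := by
  subst hlam he
  obtain ⟨U, hU, hdeg⟩ :=
    G.exists_card_eq_card_mul_sum_degree_le (m := m) (by simpa using hmn.le)
  have heig :=
    G.two_mul_card_edgeFinset_mul_le_sum_Iio_eigenvalues_lapMatrix hL σ hlamAnti ⟨m, hmn⟩
  have htop : filter (fun i : Fin n ↦ (i : ℕ) < m) univ = Iio ⟨m, hmn⟩ := by
    ext; simp [Fin.lt_def]
  refine ⟨U, hU, htop ▸ add_div_mul_sub_one_le ?_ ?_ heig⟩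
  · exact_mod_cast (show 1 < n by omega)
  · rw [Fintype.card_fin] at hdeg
    exact_mod_cast hdeg

/-- For each `0 < m < n` there is a vertex set `U` of size `m` with
`∑_{i≤m} λᵢ ≥ ∑_{u∈U} d_u + 2em/(n(n-1))`. -/
theorem stmt14 (n : ℕ) (G : SimpleGraph (Fin n)) [DecidableRel G.Adj]
    (hconn : G.Connected)
    (hL : (G.lapMatrix ℝ).IsHermitian)
    (lam : Fin n → ℝ) (σ : Equiv.Perm (Fin n))
    (hlam : lam = hL.eigenvalues ∘ σ)
    (hlamAnti : ∀ i j : Fin n, i ≤ j → lam j ≤ lam i)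
    (e : ℕ) (he : e = G.edgeFinset.card)
    (m : ℕ) (hm0 : 0 < m) (hmn : m < n) :
    ∃ U : Finset (Fin n), U.card = m ∧
      (∑ u ∈ U, (G.degree u : ℝ)) + 2 * (e : ℝ) * m / ((n : ℝ) * ((n : ℝ) - 1)) ≤
        ∑ i ∈ Finset.filter (fun i : Fin n => (i : ℕ) < m) Finset.univ, lam i :=
  stmt14_general n G hL lam σ hlam hlamAnti e he m hm0 hmn
end

section
/- Let G be a connected finite simple graph on n vertices with Laplacian eigenvalues λ₁ ≥ ⋯ ≥ λₙ = 0. Let D be a k-dominating set of cardinality m with 0 < m < n. Then λ₁ + ⋯ + λₘ ≥ (∑_{u∈D} d_u) + k. -/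
/-!
Ky Fan's principle: if `A` is real symmetric and `R` is an orthogonal projection of rank `m`,
then in an eigenbasis of `A` we have `tr (A R) = ∑ λᵢ cᵢ` with weights `cᵢ ∈ [0, 1]` (the diagonal
of the conjugated projection) summing to `m`, so `tr (A R)` is at most the sum of the `m` largest
eigenvalues. Apply this to the Laplacian `L` and the projection `R` onto the vectors that are
constant on `Dᶜ` and orthogonal to `1`, which has rank `|D|`. As `L 1 = 0`,
`tr (L R) = ∑_{u ∈ D} d_u + |Dᶜ|⁻¹ ∑_{v ∈ Dᶜ} |N(v) ∩ D|`, and `k`-domination bounds the last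
sum below by `k |Dᶜ|`.
-/

open Finset Matrix

variable {ι : Type*}

theorem Antitone.sum_mul_le_sum_filter_lt {n m : ℕ} (hmn : m < n) {lam : Fin n → ℝ}
    (hlam : Antitone lam) {b : Fin n → ℝ} (hb0 : ∀ j, 0 ≤ b j) (hb1 : ∀ j, b j ≤ 1)
    (hb : ∑ j, b j = m) :
    ∑ j, lam j * b j ≤ ∑ j ∈ univ.filter (fun j : Fin n => (j : ℕ) < m), lam j := by
  set c := lam ⟨m, hmn⟩
  have hterm : ∀ j : Fin n, lam j * b j ≤ c * b j + if (j : ℕ) < m then lam j - c else 0 := by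
    intro j
    split_ifs with hj
    · have : c ≤ lam j := hlam (Fin.le_def.mpr hj.le)
      nlinarith [hb1 j]
    · rw [add_zero]
      exact mul_le_mul_of_nonneg_right (hlam (Fin.le_def.mpr (not_lt.mp hj))) (hb0 j)
  have hcard : #(univ.filter (fun j : Fin n => (j : ℕ) < m)) = m := by
    rw [Fin.card_filter_val_lt, min_eq_right hmn.le]
  calc ∑ j, lam j * b j
      ≤ ∑ j, (c * b j + if (j : ℕ) < m then lam j - c else 0) := sum_le_sum fun j _ => hterm j
    _ = ∑ j ∈ univ.filter (fun j : Fin n => (j : ℕ) < m), lam j := by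
      rw [sum_add_distrib, ← mul_sum, ← sum_filter, sum_sub_distrib, sum_const, hcard, hb,
        nsmul_eq_mul]
      ring

namespace IsStarProjection

variable [Fintype ι] {R : Matrix ι ι ℝ}

theorem matrix_diag_nonneg (hR : IsStarProjection R) (i : ι) : 0 ≤ R i i := by
  have : R = Rᴴ * R := by
    rw [← star_eq_conjTranspose, hR.isSelfAdjoint.star_eq, hR.isIdempotentElem.eq]
  rw [this]
  exact (posSemidef_conjTranspose_mul_self R).diag_nonneg

theorem matrix_diag_le_one [DecidableEq ι] (hR : IsStarProjection R) (i : ι) : R i i ≤ 1 := by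
  simpa using hR.one_sub.matrix_diag_nonneg i

end IsStarProjection

theorem Matrix.IsHermitian.trace_mul_le_sum_eigenvalues_s16 {n m : ℕ}
    {A R : Matrix (Fin n) (Fin n) ℝ} (hA : A.IsHermitian) (hR : IsStarProjection R)
    (hRm : R.trace = m) (hmn : m < n) {σ : Equiv.Perm (Fin n)}
    (hσ : Antitone (hA.eigenvalues ∘ σ)) :
    (A * R).trace ≤ ∑ j ∈ univ.filter (fun j : Fin n => (j : ℕ) < m), (hA.eigenvalues ∘ σ) j := by
  let conj := Unitary.conjStarAlgAut ℝ _ (star hA.eigenvectorUnitary)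
  have htrace (X : Matrix (Fin n) (Fin n) ℝ) : (conj X).trace = X.trace := by
    simp [conj, Unitary.conjStarAlgAut_apply, trace_mul_cycle]
  have hS : IsStarProjection (conj R) := hR.map conj
  have hAR : (A * R).trace = ∑ i, hA.eigenvalues i * conj R i i := by
    rw [← htrace, map_mul, hA.conjStarAlgAut_star_eigenvectorUnitary]
    simp [trace, diagonal_mul]
  rw [hAR, ← Equiv.sum_comp σ]
  refine hσ.sum_mul_le_sum_filter_lt hmn (fun _ => hS.matrix_diag_nonneg _)
    (fun _ => hS.matrix_diag_le_one _) ?_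
  rw [Equiv.sum_comp σ (fun i => conj R i i), ← hRm, ← htrace]
  rfl

namespace Finset

variable [DecidableEq ι] (S : Finset ι)

def indicatorVec : ι → ℝ := fun i => if i ∈ S then 1 else 0

theorem indicatorVec_ne_zero {S : Finset ι} (hS : S.Nonempty) : S.indicatorVec ≠ 0 := by
  obtain ⟨i, hi⟩ := hS
  exact Function.ne_iff.mpr ⟨i, by simp [indicatorVec, hi]⟩

variable [Fintype ι]

theorem dotProduct_indicatorVec (y : ι → ℝ) : y ⬝ᵥ S.indicatorVec = ∑ i ∈ S, y i := by
  simp [dotProduct, indicatorVec]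

theorem indicatorVec_dotProduct_self : S.indicatorVec ⬝ᵥ S.indicatorVec = #S := by
  simp [dotProduct_indicatorVec, indicatorVec]

theorem indicatorVec_dotProduct_one : S.indicatorVec ⬝ᵥ 1 = #S := by
  simp [dotProduct_one, indicatorVec]

theorem indicatorVec_mul_indicatorVec_compl : S.indicatorVec * Sᶜ.indicatorVec = 0 := by
  ext i
  by_cases hi : i ∈ S <;> simp [indicatorVec, hi]

theorem indicatorVec_add_indicatorVec_compl : S.indicatorVec + Sᶜ.indicatorVec = 1 := by
  ext i
  by_cases hi : i ∈ S <;> simp [indicatorVec, hi]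

end Finset

namespace Matrix

variable [Fintype ι]

noncomputable def lineProj (x : ι → ℝ) : Matrix ι ι ℝ := (x ⬝ᵥ x)⁻¹ • vecMulVec x x

theorem mul_lineProj (M : Matrix ι ι ℝ) (x : ι → ℝ) :
    M * lineProj x = (x ⬝ᵥ x)⁻¹ • vecMulVec (M *ᵥ x) x := by
  rw [lineProj, mul_smul_comm, mul_vecMulVec]

theorem mul_lineProj_of_mulVec_eq {M : Matrix ι ι ℝ} {x : ι → ℝ} (h : M *ᵥ x = x) :
    M * lineProj x = lineProj x := by
  rw [mul_lineProj, h, lineProj]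

theorem lineProj_mulVec (x y : ι → ℝ) : lineProj x *ᵥ y = ((x ⬝ᵥ x)⁻¹ * (x ⬝ᵥ y)) • x := by
  rw [lineProj, smul_mulVec, vecMulVec_mulVec, op_smul_eq_smul, smul_smul]

theorem lineProj_mulVec_self {x : ι → ℝ} (hx : x ≠ 0) : lineProj x *ᵥ x = x := by
  rw [lineProj_mulVec, inv_mul_cancel₀ (dotProduct_self_eq_zero.not.mpr hx), one_smul]

theorem trace_mul_lineProj (M : Matrix ι ι ℝ) (x : ι → ℝ) :
    (M * lineProj x).trace = (x ⬝ᵥ x)⁻¹ * (M *ᵥ x ⬝ᵥ x) := by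
  rw [mul_lineProj, trace_smul, trace_vecMulVec, smul_eq_mul]

theorem trace_lineProj {x : ι → ℝ} (hx : x ≠ 0) : (lineProj x).trace = 1 := by
  have : x ⬝ᵥ x ≠ 0 := dotProduct_self_eq_zero.not.mpr hx
  rw [lineProj, trace_smul, trace_vecMulVec, smul_eq_mul, inv_mul_cancel₀ this]

theorem isStarProjection_lineProj {x : ι → ℝ} (hx : x ≠ 0) : IsStarProjection (lineProj x) where
  isSelfAdjoint := by simp [IsSelfAdjoint, lineProj, star_eq_conjTranspose]
  isIdempotentElem := mul_lineProj_of_mulVec_eq (lineProj_mulVec_self hx)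

theorem isStarProjection_diagonal_indicatorVec [DecidableEq ι] (S : Finset ι) :
    IsStarProjection (diagonal S.indicatorVec) where
  isSelfAdjoint := by simp [IsSelfAdjoint, star_eq_conjTranspose]
  isIdempotentElem := by
    rw [IsIdempotentElem, diagonal_mul_diagonal]
    congr 1
    ext i
    by_cases hi : i ∈ S <;> simp [indicatorVec, hi]

end Matrix

section Domination

variable [Fintype ι] [DecidableEq ι]

noncomputable def Finset.dominationProj (D : Finset ι) : Matrix ι ι ℝ :=
  diagonal D.indicatorVec + lineProj Dᶜ.indicatorVec - lineProj 1

variable {D : Finset ι}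

theorem Finset.compl_nonempty_of_card_lt (hD : #D < Fintype.card ι) : Dᶜ.Nonempty :=
  card_pos.mp (by rw [card_compl]; omega)

theorem Finset.isStarProjection_dominationProj (hD : #D < Fintype.card ι) :
    IsStarProjection D.dominationProj := by
  have hDc := compl_nonempty_of_card_lt hD
  have : Nonempty ι := hDc.to_type
  have hDc0 : (#Dᶜ : ℝ) ≠ 0 := by exact_mod_cast hDc.card_pos.ne'
  have hdiag (x : ι → ℝ) : diagonal D.indicatorVec *ᵥ x = D.indicatorVec * x :=
    funext fun i => mulVec_diagonal _ _ i
  have hP := (isStarProjection_diagonal_indicatorVec D).add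
    (isStarProjection_lineProj (indicatorVec_ne_zero hDc)) ?_
  · refine (isStarProjection_lineProj one_ne_zero).sub_of_mul_eq_right hP
      (mul_lineProj_of_mulVec_eq ?_)
    rw [add_mulVec, lineProj_mulVec, indicatorVec_dotProduct_self, indicatorVec_dotProduct_one,
      inv_mul_cancel₀ hDc0, one_smul, hdiag, mul_one, indicatorVec_add_indicatorVec_compl]
  · rw [mul_lineProj, hdiag, indicatorVec_mul_indicatorVec_compl, zero_vecMulVec, smul_zero]

theorem Finset.trace_dominationProj (hD : #D < Fintype.card ι) :
    D.dominationProj.trace = #D := by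
  have hDc := compl_nonempty_of_card_lt hD
  have : Nonempty ι := hDc.to_type
  rw [dominationProj, trace_sub, trace_add, trace_lineProj (indicatorVec_ne_zero hDc),
    trace_lineProj one_ne_zero, trace_diagonal]
  simp [indicatorVec]

end Domination

namespace SimpleGraph

variable {V : Type*} [Fintype V] [DecidableEq V] (G : SimpleGraph V) [DecidableRel G.Adj]
  {D : Finset V}

theorem lapMatrix_mulVec_indicatorVec_compl_apply {v : V} (hv : v ∉ D) :
    (G.lapMatrix ℝ *ᵥ Dᶜ.indicatorVec) v = #(D.filter (G.Adj v)) := by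
  rw [eq_sub_of_add_eq' D.indicatorVec_add_indicatorVec_compl, mulVec_sub, Pi.one_def,
    lapMatrix_mulVec_const_eq_zero, zero_sub, Pi.neg_apply, lapMatrix_mulVec_apply]
  simp only [indicatorVec, hv, if_false, mul_zero, zero_sub, neg_neg, sum_boole]
  congr 2
  ext u
  simp [and_comm]

theorem trace_lapMatrix_mul_dominationProj :
    (G.lapMatrix ℝ * D.dominationProj).trace =
      ∑ u ∈ D, (G.degree u : ℝ) + (#Dᶜ : ℝ)⁻¹ * ∑ v ∈ Dᶜ, (#(D.filter (G.Adj v)) : ℝ) := by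
  rw [dominationProj, mul_sub, mul_add, trace_sub, trace_add, trace_mul_lineProj,
    trace_mul_lineProj, Pi.one_def, lapMatrix_mulVec_const_eq_zero, zero_dotProduct, mul_zero,
    sub_zero, indicatorVec_dotProduct_self, dotProduct_indicatorVec]
  congr 1
  · simp [trace, mul_diagonal, indicatorVec, lapMatrix, degMatrix]
  · congr 1
    exact sum_congr rfl fun v hv => G.lapMatrix_mulVec_indicatorVec_compl_apply (mem_compl.mp hv)

theorem le_trace_lapMatrix_mul_dominationProj (hD : #D < Fintype.card V) {k : ℕ}
    (hdom : ∀ v ∉ D, k ≤ #(D.filter (G.Adj v))) :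
    ∑ u ∈ D, (G.degree u : ℝ) + k ≤ (G.lapMatrix ℝ * D.dominationProj).trace := by
  rw [trace_lapMatrix_mul_dominationProj]
  gcongr
  have hDc : (0 : ℝ) < #Dᶜ := by exact_mod_cast (compl_nonempty_of_card_lt hD).card_pos
  rw [le_inv_mul_iff₀ hDc, ← nsmul_eq_mul]
  exact card_nsmul_le_sum _ _ _ fun v hv => by exact_mod_cast hdom v (mem_compl.mp hv)

end SimpleGraph

theorem stmt16_general (n : ℕ) (G : SimpleGraph (Fin n)) [DecidableRel G.Adj]
    (hL : (G.lapMatrix ℝ).IsHermitian)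
    (lam : Fin n → ℝ) (σ : Equiv.Perm (Fin n))
    (hlam : lam = hL.eigenvalues ∘ σ)
    (hlamAnti : ∀ i j : Fin n, i ≤ j → lam j ≤ lam i)
    (k : ℕ) (D : Finset (Fin n)) (m : ℕ) (hD : D.card = m)
    (hmn : m < n)
    (hdom : ∀ v : Fin n, v ∉ D → k ≤ (D.filter (fun u => G.Adj v u)).card) :
    (∑ u ∈ D, (G.degree u : ℝ)) + (k : ℝ) ≤
      ∑ i ∈ Finset.filter (fun i : Fin n => (i : ℕ) < m) Finset.univ, lam i := by
  subst hD hlam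
  have hDn : #D < Fintype.card (Fin n) := by rwa [Fintype.card_fin]
  calc _ ≤ (G.lapMatrix ℝ * D.dominationProj).trace :=
        G.le_trace_lapMatrix_mul_dominationProj hDn hdom
    _ ≤ _ := hL.trace_mul_le_sum_eigenvalues_s16 (isStarProjection_dominationProj hDn)
        (trace_dominationProj hDn) hmn hlamAnti

/-- If `D` is a `k`-dominating set of size `m` in a connected graph, then
`∑_{i≤m} λᵢ ≥ ∑_{u∈D} d_u + k`. -/
theorem stmt16 (n : ℕ) (G : SimpleGraph (Fin n)) [DecidableRel G.Adj]
    (hconn : G.Connected)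
    (hL : (G.lapMatrix ℝ).IsHermitian)
    (lam : Fin n → ℝ) (σ : Equiv.Perm (Fin n))
    (hlam : lam = hL.eigenvalues ∘ σ)
    (hlamAnti : ∀ i j : Fin n, i ≤ j → lam j ≤ lam i)
    (k : ℕ) (D : Finset (Fin n)) (m : ℕ) (hD : D.card = m)
    (hm0 : 0 < m) (hmn : m < n)
    (hdom : ∀ v : Fin n, v ∉ D → k ≤ (D.filter (fun u => G.Adj v u)).card) :
    (∑ u ∈ D, (G.degree u : ℝ)) + (k : ℝ) ≤
      ∑ i ∈ Finset.filter (fun i : Fin n => (i : ℕ) < m) Finset.univ, lam i :=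
  stmt16_general n G hL lam σ hlam hlamAnti k D m hD hmn hdom
end
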